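/- Let Q be an inverse quantal frame and X a principal Q-sheaf. For all local bisections s, t ∈ 𝔅_X with 1_Q·s = 1_Q·t, there is one and only one partial unit u ∈ Q_I such that s = ut and ς_Q(u*) = ς_X(t); moreover this unique u equals ⟨s,t⟩. -/

import Mathlib

/-- A unital involutive quantale: a complete lattice with an associative
multiplication preserving arbitrary joins in each variable, a unit `e`, and a
join-preserving involution. -/
structure UQuantale (Q : Type*) [CompleteLattice Q] where
  mul : Q → Q → Q
  e : Q
  star : Q → Q
  mul_assoc : ∀ a b c, mul (mul a b) c = mul a (mul b c)
  sSup_mul : ∀ (S : Set Q) (b : Q), mul (sSup S) b = ⨆ a ∈ S, mul a b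
  mul_sSup : ∀ (a : Q) (S : Set Q), mul a (sSup S) = ⨆ b ∈ S, mul a b
  e_mul : ∀ a, mul e a = a
  mul_e : ∀ a, mul a e = a
  star_star : ∀ a, star (star a) = a
  star_mul : ∀ a b, star (mul a b) = mul (star b) (star a)
  star_sSup : ∀ S : Set Q, star (sSup S) = ⨆ a ∈ S, star a

/-- The set of partial units of a quantale. -/
def UQuantale.PU {Q : Type*} [CompleteLattice Q] (Qs : UQuantale Q) : Set Q :=
  {s | Qs.mul s (Qs.star s) ≤ Qs.e ∧ Qs.mul (Qs.star s) s ≤ Qs.e}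

/-- An inverse quantal frame: a unital involutive quantale which is a frame,
has a stable support, and whose partial units join to the top. -/
structure InverseQuantalFrame (Q : Type*) [Order.Frame Q] extends toQuantale : UQuantale Q where
  supp : Q → Q
  supp_le_e : ∀ a, supp a ≤ e
  supp_sSup : ∀ S : Set Q, supp (sSup S) = ⨆ a ∈ S, supp a
  supp_le_mul_star : ∀ a, supp a ≤ mul a (star a)
  le_supp_mul : ∀ a, a ≤ mul (supp a) a
  supp_stable : ∀ b a, b ≤ e → supp (mul b a) = mul b (supp a)
  sSup_PU : sSup {s | mul s (star s) ≤ e ∧ mul (star s) s ≤ e} = ⊤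

/-- A left module over a quantale: a complete lattice with a unital associative
action preserving arbitrary joins in each variable. -/
structure QuantaleModule {Q : Type*} [CompleteLattice Q] (Qs : UQuantale Q)
    (X : Type*) [CompleteLattice X] where
  act : Q → X → X
  act_mul : ∀ a b x, act (Qs.mul a b) x = act a (act b x)
  act_e : ∀ x, act Qs.e x = x
  sSup_act : ∀ (S : Set Q) (x : X), act (sSup S) x = ⨆ a ∈ S, act a x
  act_sSup : ∀ (a : Q) (S : Set X), act a (sSup S) = ⨆ x ∈ S, act a x

/-- A pre-Hilbert module over a quantale. -/
structure PreHilbertModule {Q : Type*} [CompleteLattice Q] (Qs : UQuantale Q)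
    (X : Type*) [CompleteLattice X] extends QuantaleModule Qs X where
  inner : X → X → Q
  inner_act : ∀ a x y, inner (act a x) y = Qs.mul a (inner x y)
  sSup_inner : ∀ (S : Set X) (y : X), inner (sSup S) y = ⨆ x ∈ S, inner x y
  inner_star : ∀ x y, inner x y = Qs.star (inner y x)

namespace PreHilbertModule

variable {Q X : Type*} [CompleteLattice Q] [CompleteLattice X] {Qs : UQuantale Q}

/-- A Hilbert section: `⟨x,s⟩s ≤ x` for all `x`. -/
def IsHilbertSection (H : PreHilbertModule Qs X) (s : X) : Prop :=
  ∀ x, H.act (H.inner x s) s ≤ x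

/-- A regular element: `⟨s,s⟩s = s`. -/
def IsRegularSection (H : PreHilbertModule Qs X) (s : X) : Prop :=
  H.act (H.inner s s) s = s

/-- A Hilbert basis: `x = ⋁_{t ∈ S} ⟨x,t⟩t` for all `x`. -/
def IsHilbertBasis (H : PreHilbertModule Qs X) (S : Set X) : Prop :=
  ∀ x, x = ⨆ t ∈ S, H.act (H.inner x t) t

/-- Non-degeneracy of the inner product. -/
def Nondegenerate (H : PreHilbertModule Qs X) : Prop :=
  ∀ x y, (∀ z, H.inner x z = H.inner y z) → x = y

end PreHilbertModule

/-- A `Q`-locale over an inverse quantal frame: a module which is a frame and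
satisfies the anchor condition. -/
structure QLocale {Q : Type*} [Order.Frame Q] (Qf : InverseQuantalFrame Q)
    (X : Type*) [Order.Frame X] extends QuantaleModule Qf.toQuantale X where
  anchor : ∀ b x, b ≤ Qf.e → act b x = act b ⊤ ⊓ x

/-- A `Q`-sheaf over an inverse quantal frame: a pre-Hilbert module which is a
frame, satisfies the anchor condition, and has a Hilbert basis. -/
structure QSheaf {Q : Type*} [Order.Frame Q] (Qf : InverseQuantalFrame Q)
    (X : Type*) [Order.Frame X] extends PreHilbertModule Qf.toQuantale X where
  anchor : ∀ b x, b ≤ Qf.e → act b x = act b ⊤ ⊓ x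
  hasBasis : ∃ S : Set X, ∀ x, x = ⨆ t ∈ S, act (inner x t) t

namespace QSheaf

variable {Q X : Type*} [Order.Frame Q] [Order.Frame X] {Qf : InverseQuantalFrame Q}

/-- The support `ς_X(x) = ⟨x,x⟩ ∧ e` of a `Q`-sheaf. -/
def sppX (H : QSheaf Qf X) (x : X) : Q := H.inner x x ⊓ Qf.e

/-- A local section: `ς_X(x)s = x` for all `x ≤ s`. -/
def IsLocalSection (H : QSheaf Qf X) (s : X) : Prop :=
  ∀ x ≤ s, H.act (H.sppX x) s = x

/-- A principal section: a local section with `⟨s,s⟩ ≤ e`. -/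
def IsPrincipalSection (H : QSheaf Qf X) (s : X) : Prop :=
  H.IsLocalSection s ∧ H.inner s s ≤ Qf.e

/-- A right local section: `x = s ∧ 1_Q·x` for all `x ≤ s`. -/
def IsRightLocalSection (H : QSheaf Qf X) (s : X) : Prop :=
  ∀ x ≤ s, x = s ⊓ H.act ⊤ x

/-- A local bisection: simultaneously a local section and a right local section. -/
def IsBisection (H : QSheaf Qf X) (s : X) : Prop :=
  H.IsLocalSection s ∧ H.IsRightLocalSection s

end QSheaf

/-!
Since `1_Q·s = 1_Q·t`, each of `s, t` lies below the orbit of the other, and a local section `t`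
recovers every `y ≤ 1_Q·t` as `y = ⟨y,t⟩t` (cut `y` along the partial units covering `1_Q`, and
use that `ς_X(k)t = k` for `k ≤ t`). Hence `u := ⟨s,t⟩` satisfies `ut = s` and `u*s = t`, so that
`uu* = ⟨s,s⟩` and `u*u = ⟨t,t⟩`. Covering by principal sections and the right local section
property force `⟨s,s⟩, ⟨t,t⟩ ≤ e`, so `u` is a partial unit, with `ς_Q(u*) = u*u ∧ e = ς_X(t)`.
Conversely any `u` with `s = ut` and `ς_Q(u*) = ς_X(t)` satisfies
`u ≤ u ς_Q(u*) ≤ u⟨t,t⟩ = ⟨s,t⟩` and `⟨s,t⟩ = u⟨t,t⟩ ≤ ue = u`.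
-/

theorem monotone_of_map_sSup {α β : Type*} [CompleteLattice α] [CompleteLattice β] {f : α → β}
    (hf : ∀ S : Set α, f (sSup S) = ⨆ a ∈ S, f a) : Monotone f := by
  intro a b hab
  have h := hf {a, b}
  rw [sSup_pair, sup_eq_right.mpr hab] at h
  rw [h]
  exact le_biSup f (Set.mem_insert _ _)

theorem map_iSup_of_map_sSup {α β : Type*} [CompleteLattice α] [CompleteLattice β] {f : α → β}
    (hf : ∀ S : Set α, f (sSup S) = ⨆ a ∈ S, f a) {ι : Sort*} (g : ι → α) :
    f (⨆ i, g i) = ⨆ i, f (g i) := by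
  rw [iSup, hf, iSup_range]

namespace UQuantale

variable {Q : Type*} [CompleteLattice Q] (Qs : UQuantale Q)

theorem mul_le_mul {a b c d : Q} (hab : a ≤ b) (hcd : c ≤ d) : Qs.mul a c ≤ Qs.mul b d :=
  (monotone_of_map_sSup (f := (Qs.mul · c)) (Qs.sSup_mul · c) hab).trans
    (monotone_of_map_sSup (Qs.mul_sSup b) hcd)

theorem mul_le_of_le_e_left {a : Q} (b : Q) (ha : a ≤ Qs.e) : Qs.mul a b ≤ b :=
  (Qs.mul_le_mul ha le_rfl).trans_eq (Qs.e_mul b)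

theorem star_mono : Monotone Qs.star :=
  monotone_of_map_sSup Qs.star_sSup

theorem star_iSup {ι : Sort*} (f : ι → Q) : Qs.star (⨆ i, f i) = ⨆ i, Qs.star (f i) :=
  map_iSup_of_map_sSup Qs.star_sSup f

theorem star_e : Qs.star Qs.e = Qs.e := by
  have h := congrArg Qs.star (Qs.e_mul (Qs.star Qs.e))
  rwa [Qs.star_mul, Qs.star_star, Qs.e_mul] at h

theorem inf_mem_PU {v : Q} (a : Q) (hv : v ∈ Qs.PU) : a ⊓ v ∈ Qs.PU :=
  ⟨(Qs.mul_le_mul inf_le_right (Qs.star_mono inf_le_right)).trans hv.1,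
    (Qs.mul_le_mul (Qs.star_mono inf_le_right) inf_le_right).trans hv.2⟩

end UQuantale

namespace InverseQuantalFrame

variable {Q : Type*} [Order.Frame Q] (Qf : InverseQuantalFrame Q)

theorem supp_mono : Monotone Qf.supp :=
  monotone_of_map_sSup Qf.supp_sSup

theorem supp_mul_self (a : Q) : Qf.mul (Qf.supp a) a = a :=
  le_antisymm (Qf.mul_le_of_le_e_left a (Qf.supp_le_e a)) (Qf.le_supp_mul a)

theorem supp_e : Qf.supp Qf.e = Qf.e :=
  le_antisymm (Qf.supp_le_e _) (by simpa only [Qf.mul_e] using Qf.le_supp_mul Qf.e)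

theorem supp_of_le_e {b : Q} (hb : b ≤ Qf.e) : Qf.supp b = b := by
  simpa only [Qf.mul_e, Qf.supp_e] using Qf.supp_stable b Qf.e hb

theorem star_of_le_e {b : Q} (hb : b ≤ Qf.e) : Qf.star b = b := by
  have le_star : ∀ c ≤ Qf.e, c ≤ Qf.star c := fun c hc =>
    calc c = Qf.supp c := (Qf.supp_of_le_e hc).symm
      _ ≤ Qf.mul c (Qf.star c) := Qf.supp_le_mul_star c
      _ ≤ Qf.star c := Qf.mul_le_of_le_e_left _ hc
  refine le_antisymm ?_ (le_star b hb)
  simpa only [Qf.star_star] using le_star _ ((Qf.star_mono hb).trans_eq Qf.star_e)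

theorem mul_eq_mul_top_inf {b : Q} (c : Q) (hb : b ≤ Qf.e) :
    Qf.mul b c = Qf.mul b ⊤ ⊓ c := by
  refine le_antisymm (le_inf (Qf.mul_le_mul le_rfl le_top) (Qf.mul_le_of_le_e_left c hb)) ?_
  have hsupp : Qf.supp (Qf.mul b ⊤ ⊓ c) ≤ b :=
    calc Qf.supp (Qf.mul b ⊤ ⊓ c) ≤ Qf.supp (Qf.mul b ⊤) := Qf.supp_mono inf_le_left
      _ = Qf.mul b (Qf.supp ⊤) := Qf.supp_stable b ⊤ hb
      _ ≤ Qf.mul b Qf.e := Qf.mul_le_mul le_rfl (Qf.supp_le_e ⊤)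
      _ = b := Qf.mul_e b
  calc Qf.mul b ⊤ ⊓ c
      ≤ Qf.mul (Qf.supp (Qf.mul b ⊤ ⊓ c)) (Qf.mul b ⊤ ⊓ c) := Qf.le_supp_mul _
    _ ≤ Qf.mul b c := Qf.mul_le_mul hsupp inf_le_right

theorem supp_eq (a : Q) : Qf.supp a = Qf.mul a (Qf.star a) ⊓ Qf.e := by
  refine le_antisymm (le_inf (Qf.supp_le_mul_star a) (Qf.supp_le_e a)) ?_
  have hle : Qf.mul a (Qf.star a) ≤ Qf.mul (Qf.supp a) ⊤ :=
    calc Qf.mul a (Qf.star a)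
        = Qf.mul (Qf.mul (Qf.supp a) a) (Qf.star a) := by rw [Qf.supp_mul_self]
      _ = Qf.mul (Qf.supp a) (Qf.mul a (Qf.star a)) := Qf.mul_assoc _ _ _
      _ ≤ Qf.mul (Qf.supp a) ⊤ := Qf.mul_le_mul le_rfl le_top
  calc Qf.mul a (Qf.star a) ⊓ Qf.e
      ≤ Qf.mul (Qf.supp a) ⊤ ⊓ Qf.e := inf_le_inf_right _ hle
    _ = Qf.supp a := by rw [← Qf.mul_eq_mul_top_inf Qf.e (Qf.supp_le_e a), Qf.mul_e]

theorem le_mul_supp_star (a : Q) : a ≤ Qf.mul a (Qf.supp (Qf.star a)) := by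
  simpa only [Qf.star_star, Qf.star_mul, Qf.star_of_le_e (Qf.supp_le_e (Qf.star a))] using
    Qf.star_mono (Qf.le_supp_mul (Qf.star a))

theorem le_mul_mul_star_mul (v : Q) : v ≤ Qf.mul (Qf.mul v (Qf.star v)) v :=
  (Qf.le_supp_mul v).trans (Qf.mul_le_mul (Qf.supp_le_mul_star v) le_rfl)

theorem top_eq_iSup_PU : (⊤ : Q) = ⨆ v : Qf.PU, (v : Q) := by
  rw [← sSup_eq_iSup']
  exact Qf.sSup_PU.symm

end InverseQuantalFrame

namespace QuantaleModule

variable {Q X : Type*} [CompleteLattice Q] [CompleteLattice X] {Qs : UQuantale Q}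
  (M : QuantaleModule Qs X)

theorem act_mono {a b : Q} {x y : X} (hab : a ≤ b) (hxy : x ≤ y) : M.act a x ≤ M.act b y :=
  (monotone_of_map_sSup (f := (M.act · x)) (M.sSup_act · x) hab).trans
    (monotone_of_map_sSup (M.act_sSup b) hxy)

theorem le_act_top (x : X) : x ≤ M.act ⊤ x :=
  (M.act_e x).symm.trans_le (M.act_mono le_top le_rfl)

theorem act_iSup_left {ι : Sort*} (f : ι → Q) (x : X) :
    M.act (⨆ i, f i) x = ⨆ i, M.act (f i) x :=
  map_iSup_of_map_sSup (f := (M.act · x)) (M.sSup_act · x) f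

theorem act_iSup_right {ι : Sort*} (a : Q) (f : ι → X) :
    M.act a (⨆ i, f i) = ⨆ i, M.act a (f i) :=
  map_iSup_of_map_sSup (M.act_sSup a) f

end QuantaleModule

namespace PreHilbertModule

variable {Q X : Type*} [CompleteLattice Q] [CompleteLattice X] {Qs : UQuantale Q}
  (M : PreHilbertModule Qs X)

theorem inner_mono {x y z w : X} (hxy : x ≤ y) (hzw : z ≤ w) : M.inner x z ≤ M.inner y w := by
  have hleft : M.inner x z ≤ M.inner y z :=
    monotone_of_map_sSup (f := (M.inner · z)) (M.sSup_inner · z) hxy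
  refine hleft.trans ?_
  rw [M.inner_star y z, M.inner_star y w]
  exact Qs.star_mono (monotone_of_map_sSup (f := (M.inner · y)) (M.sSup_inner · y) hzw)

theorem inner_act_right (a : Q) (x y : X) :
    M.inner x (M.act a y) = Qs.mul (M.inner x y) (Qs.star a) := by
  rw [M.inner_star x (M.act a y), M.inner_act, Qs.star_mul, ← M.inner_star]

theorem inner_iSup_left {ι : Sort*} (f : ι → X) (y : X) :
    M.inner (⨆ i, f i) y = ⨆ i, M.inner (f i) y :=
  map_iSup_of_map_sSup (f := (M.inner · y)) (M.sSup_inner · y) f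

theorem inner_iSup_right {ι : Sort*} (x : X) (f : ι → X) :
    M.inner x (⨆ i, f i) = ⨆ i, M.inner x (f i) := by
  rw [M.inner_star x, M.inner_iSup_left, Qs.star_iSup]
  exact iSup_congr fun i => (M.inner_star x (f i)).symm

variable {M}

theorem IsHilbertBasis.isHilbertSection {S : Set X} (hS : M.IsHilbertBasis S) {t : X}
    (ht : t ∈ S) : M.IsHilbertSection t := by
  intro x
  conv_rhs => rw [hS x]
  exact le_biSup (fun t => M.act (M.inner x t) t) ht

theorem IsHilbertSection.mono {s t : X} (hs : M.IsHilbertSection s) (hts : t ≤ s) :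
    M.IsHilbertSection t :=
  fun x => (M.act_mono (M.inner_mono le_rfl hts) hts).trans (hs x)

theorem IsHilbertSection.act_of_mem_PU {a : Q} {s : X} (hs : M.IsHilbertSection s)
    (ha : a ∈ Qs.PU) : M.IsHilbertSection (M.act a s) := by
  intro x
  calc M.act (M.inner x (M.act a s)) (M.act a s)
      = M.act (M.inner x s) (M.act (Qs.mul (Qs.star a) a) s) := by
        simp only [M.inner_act_right, M.act_mul]
    _ ≤ M.act (M.inner x s) (M.act Qs.e s) := M.act_mono le_rfl (M.act_mono ha.2 le_rfl)
    _ ≤ x := by rw [M.act_e]; exact hs x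

end PreHilbertModule

namespace QSheaf

variable {Q X : Type*} [Order.Frame Q] [Order.Frame X] {Qf : InverseQuantalFrame Q}
  (H : QSheaf Qf X)

theorem sppX_le_e (x : X) : H.sppX x ≤ Qf.e := inf_le_right

theorem sppX_le_inner (x : X) : H.sppX x ≤ H.inner x x := inf_le_left

theorem act_sppX_self (x : X) : H.act (H.sppX x) x = x := by
  refine le_antisymm ((H.act_mono (H.sppX_le_e x) le_rfl).trans_eq (H.act_e x)) ?_
  obtain ⟨S, hS⟩ := H.hasBasis
  conv_lhs => rw [hS x]
  refine iSup₂_le fun t ht => ?_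
  have hle : H.act (H.inner x t) t ≤ x :=
    PreHilbertModule.IsHilbertBasis.isHilbertSection hS ht x
  have hsupp : Qf.supp (H.inner x t) ≤ H.sppX x := by
    rw [Qf.supp_eq, ← H.inner_star t x, ← H.inner_act]
    exact inf_le_inf_right _ (H.inner_mono hle le_rfl)
  calc H.act (H.inner x t) t
      = H.act (Qf.supp (H.inner x t)) (H.act (H.inner x t) t) := by
        rw [← H.act_mul, Qf.supp_mul_self]
    _ ≤ H.act (H.sppX x) x := H.act_mono hsupp hle

theorem sSup_isHilbertSection_le (x : X) :
    sSup {h : X | H.IsHilbertSection h ∧ h ≤ x} = x := by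
  refine le_antisymm (sSup_le fun h hh => hh.2) ?_
  obtain ⟨S, hS⟩ := H.hasBasis
  conv_lhs => rw [hS x]
  refine iSup₂_le fun t ht => ?_
  have htH : H.IsHilbertSection t := PreHilbertModule.IsHilbertBasis.isHilbertSection hS ht
  rw [← inf_top_eq (H.inner x t), Qf.top_eq_iSup_PU, inf_iSup_eq, H.act_iSup_left]
  exact iSup_le fun v => le_sSup
    ⟨htH.act_of_mem_PU (Qf.inf_mem_PU _ v.2),
      (H.act_mono inf_le_left le_rfl).trans (htH x)⟩

variable {H}

theorem act_inner_le_of_le_isLocalSection {s h h' : X} (hs : H.IsLocalSection s)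
    (hh : H.IsHilbertSection h) (hhs : h ≤ s) (hh's : h' ≤ s) (x : X) :
    H.act (H.inner x h) h' ≤ x := by
  -- `⟨x,h⟩h' = ⟨x,h⟩ς(h')s = ⟨x,k⟩s = ⟨x,k⟩ς(k)s = ⟨x,k⟩k` for `k = ς(h')h ≤ h`
  obtain ⟨k, hk⟩ : ∃ k, k = H.act (H.sppX h') h := ⟨_, rfl⟩
  have hkh : k ≤ h := hk ▸ (H.act_mono (H.sppX_le_e h') le_rfl).trans_eq (H.act_e h)
  have hks : H.act (H.sppX k) s = k := hs k (hkh.trans hhs)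
  have hinner_k : H.inner x k = Qf.mul (H.inner x h) (H.sppX h') := by
    rw [hk, H.inner_act_right, Qf.star_of_le_e (H.sppX_le_e h')]
  have hinner_k' : Qf.mul (H.inner x k) (H.sppX k) = H.inner x k := by
    conv_rhs => rw [← H.act_sppX_self k]
    rw [H.inner_act_right, Qf.star_of_le_e (H.sppX_le_e k)]
  calc H.act (H.inner x h) h'
      = H.act (H.inner x k) s := by rw [← hs h' hh's, ← H.act_mul, hinner_k]
    _ = H.act (H.inner x k) k := by
        conv_lhs => rw [← hinner_k']
        rw [H.act_mul, hks]
    _ ≤ x := hh.mono hkh x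

theorem IsLocalSection.isHilbertSection {s : X} (hs : H.IsLocalSection s) :
    H.IsHilbertSection s := by
  intro x
  set T := {h : X | H.IsHilbertSection h ∧ h ≤ s}
  have hsT : s = ⨆ h : T, (h : X) := by rw [← sSup_eq_iSup', H.sSup_isHilbertSection_le]
  calc H.act (H.inner x s) s
      = ⨆ h : T, ⨆ h' : T, H.act (H.inner x h) h' := by
        conv_lhs => rw [hsT]
        rw [H.inner_iSup_right, H.act_iSup_left]
        exact iSup_congr fun h => H.act_iSup_right _ _
    _ ≤ x := iSup_le fun h => iSup_le fun h' =>
        act_inner_le_of_le_isLocalSection hs h.2.1 h.2.2 h'.2.2 x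

theorem inf_act_le_act_inner {t : X} (ht : H.IsLocalSection t) {v : Q} (hv : v ∈ Qf.PU)
    (y : X) : y ⊓ H.act v t ≤ H.act (H.inner y t) t := by
  set w := y ⊓ H.act v t
  set k := H.act (Qf.star v) w
  have hkt : k ≤ t :=
    calc k ≤ H.act (Qf.mul (Qf.star v) v) t := by
          rw [H.act_mul]; exact H.act_mono le_rfl inf_le_right
      _ ≤ t := (H.act_mono hv.2 le_rfl).trans_eq (H.act_e t)
  have hwk : H.act v k = w := by
    -- `vv* ≤ e` acts on `w ≤ vv*·1` as the identity, by the anchor condition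
    have hw : w ≤ H.act (Qf.mul v (Qf.star v)) ⊤ :=
      calc w ≤ H.act (Qf.mul (Qf.mul v (Qf.star v)) v) t :=
            inf_le_right.trans (H.act_mono (Qf.le_mul_mul_star_mul v) le_rfl)
        _ ≤ H.act (Qf.mul v (Qf.star v)) ⊤ := by
            rw [H.act_mul]; exact H.act_mono le_rfl le_top
    rw [← H.act_mul, H.anchor _ _ hv.1]
    exact inf_eq_right.mpr hw
  have hle : Qf.mul v (H.sppX k) ≤ H.inner y t :=
    calc Qf.mul v (H.sppX k) ≤ Qf.mul v (H.inner k k) := Qf.mul_le_mul le_rfl (H.sppX_le_inner k)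
      _ = H.inner w k := by rw [← H.inner_act, hwk]
      _ ≤ H.inner y t := H.inner_mono inf_le_left hkt
  calc w = H.act (Qf.mul v (H.sppX k)) t := by rw [H.act_mul, ht k hkt, hwk]
    _ ≤ H.act (H.inner y t) t := H.act_mono hle le_rfl

theorem act_inner_eq_of_le_act_top {t y : X} (ht : H.IsLocalSection t) (hy : y ≤ H.act ⊤ t) :
    H.act (H.inner y t) t = y := by
  refine le_antisymm (ht.isHilbertSection y) ?_
  calc y = ⨆ v : Qf.PU, y ⊓ H.act (v : Q) t := by
        rw [← inf_iSup_eq, ← H.act_iSup_left, ← Qf.top_eq_iSup_PU, inf_eq_left.mpr hy]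
    _ ≤ H.act (H.inner y t) t := iSup_le fun v => inf_act_le_act_inner ht v.2 y

theorem inner_le_e_of_le_isRightLocalSection {s x y : X} (hs : H.IsRightLocalSection s)
    (hxs : x ≤ s) (hys : y ≤ s) (hx : H.IsHilbertSection x) (hy : H.IsHilbertSection y)
    (hyy : H.inner y y ≤ Qf.e) : H.inner x y ≤ Qf.e := by
  set d := H.inner x y
  have hdy : H.act d y ≤ y :=
    (le_inf ((hy x).trans hxs) (H.act_mono le_top le_rfl)).trans_eq (hs y hys).symm
  have hsupp : Qf.supp (Qf.star d) ≤ H.inner y y := by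
    rw [Qf.supp_eq, Qf.star_star, ← H.inner_star, ← H.inner_act]
    exact inf_le_left.trans (H.inner_mono (hx y) le_rfl)
  calc d ≤ Qf.mul d (Qf.supp (Qf.star d)) := Qf.le_mul_supp_star d
    _ ≤ Qf.mul d (H.inner y y) := Qf.mul_le_mul le_rfl hsupp
    _ = H.inner (H.act d y) y := (H.inner_act _ _ _).symm
    _ ≤ Qf.e := (H.inner_mono hdy le_rfl).trans hyy

theorem inner_self_le_e_of_isRightLocalSection
    (hpc : sSup {p : X | H.IsPrincipalSection p} = ⊤) {s : X} (hs : H.IsRightLocalSection s) :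
    H.inner s s ≤ Qf.e := by
  set P := {p : X | H.IsPrincipalSection p}
  have hsP : s = ⨆ p : P, s ⊓ (p : X) := by
    rw [← inf_iSup_eq, ← sSup_eq_iSup', hpc, inf_top_eq]
  have hprincipal : ∀ p : P, H.IsHilbertSection (s ⊓ (p : X)) ∧ H.inner (s ⊓ p) (s ⊓ p) ≤ Qf.e :=
    fun p => ⟨p.2.1.isHilbertSection.mono inf_le_right,
      (H.inner_mono inf_le_right inf_le_right).trans p.2.2⟩
  calc H.inner s s = ⨆ q : P, ⨆ p : P, H.inner (s ⊓ (q : X)) (s ⊓ (p : X)) := by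
        conv_lhs => rw [hsP]
        rw [H.inner_iSup_left]
        exact iSup_congr fun q => H.inner_iSup_right _ _
    _ ≤ Qf.e := iSup_le fun q => iSup_le fun p =>
        inner_le_e_of_le_isRightLocalSection hs inf_le_left inf_le_left (hprincipal q).1
          (hprincipal p).1 (hprincipal p).2

theorem mul_inner_star_of_act_inner_eq {s t : X} (h : H.act (H.inner s t) t = s) :
    Qf.mul (H.inner s t) (Qf.star (H.inner s t)) = H.inner s s := by
  rw [← H.inner_star, ← H.inner_act, h]

theorem eq_inner_of_eq_act {s t : X} {u : Q} (htt : H.inner t t ≤ Qf.e) (hs : s = H.act u t)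
    (hu : Qf.supp (Qf.star u) = H.sppX t) : u = H.inner s t := by
  rw [hs, H.inner_act]
  refine le_antisymm ?_ ((Qf.mul_le_mul le_rfl htt).trans_eq (Qf.mul_e u))
  calc u ≤ Qf.mul u (Qf.supp (Qf.star u)) := Qf.le_mul_supp_star u
    _ ≤ Qf.mul u (H.inner t t) := Qf.mul_le_mul le_rfl (hu.trans_le (H.sppX_le_inner t))

end QSheaf

theorem stmt17_general {Q X : Type*} [Order.Frame Q] [Order.Frame X]
    (Qf : InverseQuantalFrame Q) (H : QSheaf Qf X)
    (hpc : sSup {s : X | H.IsPrincipalSection s} = ⊤)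
    (s t : X) (hs : H.IsBisection s) (ht : H.IsBisection t)
    (hst : H.act ⊤ s = H.act ⊤ t) :
    (∃! u : Q, u ∈ Qf.toQuantale.PU ∧ s = H.act u t ∧
        Qf.supp (Qf.star u) = H.sppX t) ∧
    (H.inner s t ∈ Qf.toQuantale.PU ∧ s = H.act (H.inner s t) t ∧
        Qf.supp (Qf.star (H.inner s t)) = H.sppX t) := by
  obtain ⟨hsl, hsr⟩ := hs
  obtain ⟨htl, htr⟩ := ht
  have hts : H.act (H.inner s t) t = s :=
    H.act_inner_eq_of_le_act_top htl (hst ▸ H.le_act_top s)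
  have hst' : H.act (H.inner t s) s = t :=
    H.act_inner_eq_of_le_act_top hsl (hst ▸ H.le_act_top t)
  have htt : H.inner t t ≤ Qf.e := H.inner_self_le_e_of_isRightLocalSection hpc htr
  have hstar : Qf.mul (Qf.star (H.inner s t)) (H.inner s t) = H.inner t t := by
    rw [← H.inner_star, ← H.mul_inner_star_of_act_inner_eq hst', ← H.inner_star]
  have hu : H.inner s t ∈ Qf.toQuantale.PU ∧ s = H.act (H.inner s t) t ∧
      Qf.supp (Qf.star (H.inner s t)) = H.sppX t :=
    ⟨⟨(H.mul_inner_star_of_act_inner_eq hts).trans_le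
        (H.inner_self_le_e_of_isRightLocalSection hpc hsr), hstar.trans_le htt⟩,
      hts.symm, by rw [Qf.supp_eq, Qf.star_star, hstar]; rfl⟩
  exact ⟨⟨_, hu, fun u hu' => H.eq_inner_of_eq_act htt hu'.2.1 hu'.2.2⟩, hu⟩

/-- In a principal `Q`-sheaf, for local bisections `s, t` with
`1_Q·s = 1_Q·t` there is a unique partial unit `u` with `s = ut` and
`ς_Q(u*) = ς_X(t)`, and this `u` equals `⟨s,t⟩`. -/
theorem stmt17 {Q X : Type*} [Order.Frame Q] [Order.Frame X]
    (Qf : InverseQuantalFrame Q) (H : QSheaf Qf X)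
    -- X is a principal Q-sheaf (principally covered and a bisheaf):
    (hpc : sSup {s : X | H.IsPrincipalSection s} = ⊤)
    (hbisheaf : sSup {s : X | H.IsRightLocalSection s} = ⊤)
    (s t : X) (hs : H.IsBisection s) (ht : H.IsBisection t)
    (hst : H.act ⊤ s = H.act ⊤ t) :
    (∃! u : Q, u ∈ Qf.toQuantale.PU ∧ s = H.act u t ∧
        Qf.supp (Qf.star u) = H.sppX t) ∧
    (H.inner s t ∈ Qf.toQuantale.PU ∧ s = H.act (H.inner s t) t ∧
        Qf.supp (Qf.star (H.inner s t)) = H.sppX t) :=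
  stmt17_general Qf H hpc s t hs ht hst
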